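/- arXiv:1504.01225 — 4 statements merged into one kernel-verified Lean document; each statement's English description precedes it below -/
import Mathlib

section
/- The endomorphism Ř satisfies the quadratic (Hecke) relation (Ř − q^{-1}·id) ∘ (Ř + q·id) = 0 on V ⊗ V; equivalently, Ř ∘ Ř = (q^{-1} − q)·Ř + id. -/
noncomputable section

/-- The matrix (in the standard basis of `V ⊗ V`, `V` having basis `x_1, …, x_N` indexed by
`Fin N` with parity `0` for the first `m` indices and `1` for the rest) of the braiding `Ř`
of the vector representation of `U_q(gl(m|n))`:
`Ř(x_a ⊗ x_a) = q⁻¹·(x_a ⊗ x_a)` if `a ≤ m`; `Ř(x_a ⊗ x_a) = −q·(x_a ⊗ x_a)` if `a > m`;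
`Ř(x_a ⊗ x_b) = (−1)^{|a||b|}·(x_b ⊗ x_a)` if `a < b`;
`Ř(x_a ⊗ x_b) = (−1)^{|a||b|}·(x_b ⊗ x_a) + (q⁻¹ − q)·(x_a ⊗ x_b)` if `a > b`.
The first argument of the matrix is the output index, the second the input index. -/
def Rmat (F : Type*) [Field F] (q : F) (m N : ℕ) :
    Matrix (Fin N × Fin N) (Fin N × Fin N) F :=
  Matrix.of fun out inp =>
    if inp.1 = inp.2 then
      (if (inp.1 : ℕ) < m then q⁻¹ else -q) * (if out = inp then 1 else 0)
    else
      (if m ≤ (inp.1 : ℕ) ∧ m ≤ (inp.2 : ℕ) then (-1 : F) else 1) *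
          (if out = (inp.2, inp.1) then 1 else 0) +
        (if inp.2 < inp.1 then (q⁻¹ - q) * (if out = inp then 1 else 0) else 0)

/-!
Every column of `Ř` is supported on `x_a ⊗ x_b` and `x_b ⊗ x_a`, so `V ⊗ V` splits into
`Ř`-stable pieces. On a line spanned by `x_a ⊗ x_a`, `Ř` acts by `q⁻¹` or `-q`, the two roots of
`X² - (q⁻¹ - q) X - 1`. On a plane spanned by `x_a ⊗ x_b`, `x_b ⊗ x_a` with `a < b`, it acts by
`[[0, s], [s, q⁻¹ - q]]` with `s = ±1`, of trace `q⁻¹ - q` and determinant `-1`, so the same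
polynomial annihilates it by Cayley–Hamilton.
-/

theorem Matrix.mul_self_eq_smul_add_one_of_apply_eq {ι R : Type*} [Fintype ι] [DecidableEq ι]
    [CommRing R] {M : Matrix ι ι R} {d σ : ι → R} {τ : ι → ι} (hτ : Function.Involutive τ)
    (hM : ∀ i k, M i k = d k * (if i = k then 1 else 0) + σ k * (if i = τ k then 1 else 0))
    {t : R} (hd : ∀ k, d k ^ 2 + σ k * σ (τ k) = t * d k + 1)
    (hσ : ∀ k, σ k * (d k + d (τ k)) = t * σ k) :
    M * M = t • M + 1 := by
  ext i k
  have hcol : (M * M) i k = d k * M i k + σ k * M i (τ k) := by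
    rw [Matrix.mul_apply, Finset.sum_congr rfl fun j _ => by rw [hM j k]]
    simp only [mul_add, mul_ite, mul_one, mul_zero, Finset.sum_add_distrib, Finset.sum_ite_eq',
      Finset.mem_univ, if_true]
    ring
  rw [hcol, Matrix.add_apply, Matrix.smul_apply, Matrix.one_apply, smul_eq_mul, hM i k,
    hM i (τ k), hτ k]
  linear_combination (if i = k then 1 else 0 : R) * hd k +
    (if i = τ k then 1 else 0 : R) * hσ k

theorem sub_smul_one_mul_add_smul_one_eq_zero_of_mul_self {F A : Type*} [Field F] [Ring A]
    [Algebra F A] {q : F} (hq : q ≠ 0) {T : A} (hT : T * T = (q⁻¹ - q) • T + 1) :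
    (T - q⁻¹ • 1) * (T + q • 1) = 0 := by
  rw [sub_mul, mul_add, mul_add, hT, smul_mul_smul, one_mul, inv_mul_cancel₀ hq, one_smul,
    smul_mul_assoc, mul_smul_comm, one_mul, mul_one, sub_smul]
  abel

namespace Rmat

variable {F : Type*} [Field F] (q : F) (m : ℕ) {N : ℕ}

def diagCoeff (k : Fin N × Fin N) : F :=
  if k.1 = k.2 then (if (k.1 : ℕ) < m then q⁻¹ else -q)
  else if k.2 < k.1 then q⁻¹ - q else 0

def swapCoeff (k : Fin N × Fin N) : F :=
  if k.1 = k.2 then 0 else if m ≤ (k.1 : ℕ) ∧ m ≤ (k.2 : ℕ) then -1 else 1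

theorem apply_eq (i k : Fin N × Fin N) :
    Rmat F q m N i k = diagCoeff q m k * (if i = k then 1 else 0) +
      swapCoeff m k * (if i = k.swap then 1 else 0) := by
  rcases k with ⟨a, b⟩
  by_cases hab : a = b
  · subst hab
    simp [Rmat, diagCoeff, swapCoeff]
  · simp only [Rmat, diagCoeff, swapCoeff, Matrix.of_apply, Prod.swap_prod_mk, if_neg hab]
    split_ifs <;> ring

theorem diagCoeff_sq_add (hq : q ≠ 0) (k : Fin N × Fin N) :
    diagCoeff q m k ^ 2 + swapCoeff m k * swapCoeff m k.swap =
      (q⁻¹ - q) * diagCoeff q m k + 1 := by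
  rcases k with ⟨a, b⟩
  rcases lt_trichotomy a b with h | rfl | h
  · simp only [diagCoeff, swapCoeff, Prod.swap_prod_mk, if_neg h.ne, if_neg h.ne',
      if_neg h.not_gt, and_comm (a := m ≤ (b : ℕ))]
    split_ifs <;> ring
  · simp only [diagCoeff, swapCoeff, if_true]
    split_ifs <;> field_simp <;> ring
  · simp only [diagCoeff, swapCoeff, Prod.swap_prod_mk, if_neg h.ne, if_neg h.ne', if_pos h,
      and_comm (a := m ≤ (b : ℕ))]
    split_ifs <;> ring

theorem swapCoeff_mul_add (k : Fin N × Fin N) :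
    swapCoeff m k * (diagCoeff q m k + diagCoeff q m k.swap) = (q⁻¹ - q) * swapCoeff m k := by
  rcases k with ⟨a, b⟩
  rcases lt_trichotomy a b with h | rfl | h
  · simp [diagCoeff, swapCoeff, h, h.ne, h.ne', h.not_gt]
  · simp [swapCoeff]
  · simp [diagCoeff, swapCoeff, h, h.ne, h.ne', h.not_gt]

theorem mul_self (hq : q ≠ 0) :
    Rmat F q m N * Rmat F q m N = (q⁻¹ - q) • Rmat F q m N + 1 :=
  Matrix.mul_self_eq_smul_add_one_of_apply_eq Prod.swap_swap (apply_eq q m)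
    (diagCoeff_sq_add q m hq) (swapCoeff_mul_add q m)

end Rmat

theorem stmt5_general (F : Type*) [Field F] (q : F) (hq : q ≠ 0) (m n : ℕ) :
    ((Matrix.toLin' (Rmat F q m (m + n)) - q⁻¹ • LinearMap.id) ∘ₗ
        (Matrix.toLin' (Rmat F q m (m + n)) + q • LinearMap.id) = 0) ∧
      Matrix.toLin' (Rmat F q m (m + n)) ∘ₗ Matrix.toLin' (Rmat F q m (m + n)) =
        (q⁻¹ - q) • Matrix.toLin' (Rmat F q m (m + n)) + LinearMap.id := by
  have hsq : Matrix.toLin' (Rmat F q m (m + n)) * Matrix.toLin' (Rmat F q m (m + n)) =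
      (q⁻¹ - q) • Matrix.toLin' (Rmat F q m (m + n)) + 1 := by
    rw [Module.End.mul_eq_comp, ← Matrix.toLin'_mul, Rmat.mul_self q m hq, map_add, map_smul,
      Matrix.toLin'_one, Module.End.one_eq_id]
  exact ⟨sub_smul_one_mul_add_smul_one_eq_zero_of_mul_self hq hsq, hsq⟩

/-- The braiding `Ř` of the vector representation of `U_q(gl(m|n))` satisfies the Hecke
quadratic relation `(Ř − q⁻¹·id) ∘ (Ř + q·id) = 0`; equivalently
`Ř ∘ Ř = (q⁻¹ − q)·Ř + id`. -/
theorem stmt5 (F : Type*) [Field F] (q : F) (hq : q ≠ 0) (m n : ℕ) (hmn : 1 ≤ m + n) :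
    ((Matrix.toLin' (Rmat F q m (m + n)) - q⁻¹ • LinearMap.id) ∘ₗ
        (Matrix.toLin' (Rmat F q m (m + n)) + q • LinearMap.id) = 0) ∧
      Matrix.toLin' (Rmat F q m (m + n)) ∘ₗ Matrix.toLin' (Rmat F q m (m + n)) =
        (q⁻¹ - q) • Matrix.toLin' (Rmat F q m (m + n)) + LinearMap.id :=
  stmt5_general F q hq m n
end
end

section
/- The endomorphism Ř satisfies the Yang–Baxter (braid) relation on V ⊗ V ⊗ V: (Ř ⊗ id_V) ∘ (id_V ⊗ Ř) ∘ (Ř ⊗ id_V) = (id_V ⊗ Ř) ∘ (Ř ⊗ id_V) ∘ (id_V ⊗ Ř). -/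
noncomputable section

/-- The matrix of `Ř ⊗ id_V` on `V ⊗ V ⊗ V`. -/
def R12 (F : Type*) [Field F] (q : F) (m N : ℕ) :
    Matrix (Fin N × Fin N × Fin N) (Fin N × Fin N × Fin N) F :=
  Matrix.of fun out inp =>
    Rmat F q m N (out.1, out.2.1) (inp.1, inp.2.1) * (if out.2.2 = inp.2.2 then 1 else 0)

/-- The matrix of `id_V ⊗ Ř` on `V ⊗ V ⊗ V`. -/
def R23 (F : Type*) [Field F] (q : F) (m N : ℕ) :
    Matrix (Fin N × Fin N × Fin N) (Fin N × Fin N × Fin N) F :=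
  Matrix.of fun out inp =>
    (if out.1 = inp.1 then 1 else 0) * Rmat F q m N (out.2.1, out.2.2) (inp.2.1, inp.2.2)

namespace YBaux

variable {F : Type*} [Field F]

/-- diagonal/descent coefficient -/
def C1 (q : F) (m N : ℕ) (x y : Fin N) : F :=
  if x = y then (if (x : ℕ) < m then q⁻¹ else -q) else if y < x then q⁻¹ - q else 0

/-- sign coefficient -/
def C2 (F : Type*) [Field F] (m N : ℕ) (x y : Fin N) : F :=
  if x = y then 0 else if m ≤ (x : ℕ) ∧ m ≤ (y : ℕ) then -1 else 1

theorem ite_mul_ite (P Q : Prop) [Decidable P] [Decidable Q] :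
    (if P then (1 : F) else 0) * (if Q then 1 else 0) = if P ∧ Q then 1 else 0 := by
  split_ifs <;> simp_all

theorem Rmat_apply (q : F) (m N : ℕ) (o i : Fin N × Fin N) :
    Rmat F q m N o i =
      C1 q m N i.1 i.2 * (if o = i then 1 else 0) +
        C2 F m N i.1 i.2 * (if o = (i.2, i.1) then 1 else 0) := by
  by_cases h : i.1 = i.2
  · have hi : (i.2, i.1) = i := Prod.ext h.symm h
    simp [Rmat, C1, C2, h, hi]
  · simp only [Rmat, Matrix.of_apply, if_neg h, C1, C2, if_neg h,
      if_neg (fun hh : i.2 = i.1 => h hh.symm)]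
    split_ifs <;> ring

theorem R12_apply (q : F) (m N : ℕ) (o i : Fin N × Fin N × Fin N) :
    R12 F q m N o i =
      C1 q m N i.1 i.2.1 * (if o = i then 1 else 0) +
        C2 F m N i.1 i.2.1 * (if o = (i.2.1, i.1, i.2.2) then 1 else 0) := by
  obtain ⟨o1, o2, o3⟩ := o
  obtain ⟨i1, i2, i3⟩ := i
  have key : ∀ (x y z : Fin N),
      (((o1, o2) : Fin N × Fin N) = (x, y) ∧ o3 = z) ↔
        ((o1, o2, o3) : Fin N × Fin N × Fin N) = (x, y, z) := by
    intro x y z; simp [Prod.ext_iff, and_assoc]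
  simp only [R12, Matrix.of_apply, Rmat_apply, add_mul, mul_assoc, ite_mul_ite, key]

theorem R23_apply (q : F) (m N : ℕ) (o i : Fin N × Fin N × Fin N) :
    R23 F q m N o i =
      C1 q m N i.2.1 i.2.2 * (if o = i then 1 else 0) +
        C2 F m N i.2.1 i.2.2 * (if o = (i.1, i.2.2, i.2.1) then 1 else 0) := by
  obtain ⟨o1, o2, o3⟩ := o
  obtain ⟨i1, i2, i3⟩ := i
  have key : ∀ (x y z : Fin N),
      (((o2, o3) : Fin N × Fin N) = (y, z) ∧ o1 = x) ↔
        ((o1, o2, o3) : Fin N × Fin N × Fin N) = (x, y, z) := by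
    intro x y z; simp [Prod.ext_iff, and_comm, and_assoc]
  rw [R23, Matrix.of_apply, Rmat_apply, mul_comm, add_mul, mul_assoc, mul_assoc,
    ite_mul_ite, ite_mul_ite]
  simp only [key]

theorem mul_col {ι : Type*} [Fintype ι] [DecidableEq ι] (A : Matrix ι ι F) {B : Matrix ι ι F}
    {i : ι} {e1 e2 : F} {p1 p2 : ι}
    (hB : ∀ o, B o i = e1 * (if o = p1 then 1 else 0) + e2 * (if o = p2 then 1 else 0))
    (o : ι) : (A * B) o i = e1 * A o p1 + e2 * A o p2 := by
  simp only [Matrix.mul_apply, hB, mul_add, mul_ite, mul_one, mul_zero,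
    Finset.sum_add_distrib, Finset.sum_ite_eq', Finset.mem_univ, if_true]
  ring

theorem QC1_lt {q : F} {m N : ℕ} {x y : Fin N} (h : x < y) : q * C1 q m N x y = 0 := by
  rw [C1, if_neg (by omega), if_neg (by omega), mul_zero]

theorem QC1_gt {q : F} (hq : q ≠ 0) {m N : ℕ} {x y : Fin N} (h : y < x) :
    q * C1 q m N x y = 1 - q ^ 2 := by
  rw [C1, if_neg (by omega), if_pos h, mul_sub, mul_inv_cancel₀ hq]; ring

theorem QC1_diag_lt {q : F} (hq : q ≠ 0) {m N : ℕ} {x : Fin N} (h : (x : ℕ) < m) :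
    q * C1 q m N x x = 1 := by
  rw [C1, if_pos rfl, if_pos h, mul_inv_cancel₀ hq]

theorem QC1_diag_ge {q : F} {m N : ℕ} {x : Fin N} (h : ¬ (x : ℕ) < m) :
    q * C1 q m N x x = -q ^ 2 := by
  rw [C1, if_pos rfl, if_neg h]; ring

theorem QC2_diag {q : F} {m N : ℕ} {x : Fin N} : q * C2 F m N x x = 0 := by
  rw [C2, if_pos rfl, mul_zero]

theorem QC2_pos_left {q : F} {m N : ℕ} {x y : Fin N} (h : (x : ℕ) < m) (hxy : x ≠ y) :
    q * C2 F m N x y = q := by rw [C2, if_neg hxy, if_neg (by omega), mul_one]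

theorem QC2_pos_right {q : F} {m N : ℕ} {x y : Fin N} (h : (y : ℕ) < m) (hxy : x ≠ y) :
    q * C2 F m N x y = q := by rw [C2, if_neg hxy, if_neg (by omega), mul_one]

theorem QC2_neg {q : F} {m N : ℕ} {x y : Fin N} (hx : ¬ (x : ℕ) < m) (hy : ¬ (y : ℕ) < m)
    (hxy : x ≠ y) : q * C2 F m N x y = -q := by
  rw [C2, if_neg hxy, if_pos ⟨by omega, by omega⟩]; ring

theorem core' (q : F) (hq : q ≠ 0) (m N : ℕ) (o : Fin N × Fin N × Fin N) (a b c : Fin N) :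
    q * C1 q m N a b * (q * C1 q m N b c *
          (q * C1 q m N a b * (if o = (a, b, c) then 1 else 0) +
            q * C2 F m N a b * (if o = (b, a, c) then 1 else 0)) +
        q * C2 F m N b c *
          (q * C1 q m N a c * (if o = (a, c, b) then 1 else 0) +
            q * C2 F m N a c * (if o = (c, a, b) then 1 else 0))) +
      q * C2 F m N a b * (q * C1 q m N a c *
            (q * C1 q m N b a * (if o = (b, a, c) then 1 else 0) +
              q * C2 F m N b a * (if o = (a, b, c) then 1 else 0)) +
          q * C2 F m N a c *
            (q * C1 q m N b c * (if o = (b, c, a) then 1 else 0) +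
              q * C2 F m N b c * (if o = (c, b, a) then 1 else 0))) =
    q * C1 q m N b c * (q * C1 q m N a b *
          (q * C1 q m N b c * (if o = (a, b, c) then 1 else 0) +
            q * C2 F m N b c * (if o = (a, c, b) then 1 else 0)) +
        q * C2 F m N a b *
          (q * C1 q m N a c * (if o = (b, a, c) then 1 else 0) +
            q * C2 F m N a c * (if o = (b, c, a) then 1 else 0))) +
      q * C2 F m N b c * (q * C1 q m N a c *
            (q * C1 q m N c b * (if o = (a, c, b) then 1 else 0) +
              q * C2 F m N c b * (if o = (a, b, c) then 1 else 0)) +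
          q * C2 F m N a c *
            (q * C1 q m N a b * (if o = (c, a, b) then 1 else 0) +
              q * C2 F m N a b * (if o = (c, b, a) then 1 else 0))) := by
  rcases lt_trichotomy a b with hab | hab | hab <;>
    rcases lt_trichotomy b c with hbc | hbc | hbc <;>
      rcases lt_trichotomy a c with hac | hac | hac
  all_goals try rw [hab]
  all_goals try rw [hbc]
  all_goals try rw [hac]
  all_goals
    first
      | (exfalso; omega)
      | (by_cases pa : (a : ℕ) < m <;> by_cases pb : (b : ℕ) < m <;>
          by_cases pc : (c : ℕ) < m <;>
          first
            | (exfalso; omega)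
            | (simp (disch := omega) only [QC1_lt, QC1_gt hq, QC1_diag_lt hq, QC1_diag_ge,
                QC2_diag, QC2_pos_left, QC2_pos_right, QC2_neg]
               ring))

theorem key (q : F) (hq : q ≠ 0) (m N : ℕ) :
    R12 F q m N * (R23 F q m N * R12 F q m N) = R23 F q m N * (R12 F q m N * R23 F q m N) := by
  rw [← mul_assoc, ← mul_assoc]
  ext o i
  obtain ⟨a, b, c⟩ := i
  rw [mul_col (R12 F q m N * R23 F q m N) (fun o' => R12_apply q m N o' (a, b, c)),
    mul_col (R23 F q m N * R12 F q m N) (fun o' => R23_apply q m N o' (a, b, c)),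
    mul_col (R12 F q m N) (fun o' => R23_apply q m N o' (a, b, c)),
    mul_col (R12 F q m N) (fun o' => R23_apply q m N o' (b, a, c)),
    mul_col (R23 F q m N) (fun o' => R12_apply q m N o' (a, b, c)),
    mul_col (R23 F q m N) (fun o' => R12_apply q m N o' (a, c, b))]
  simp only [R12_apply, R23_apply]
  apply mul_left_cancel₀ (pow_ne_zero 3 hq)
  linear_combination core' q hq m N o a b c

end YBaux

/-- The braiding `Ř` of the vector representation of `U_q(gl(m|n))` satisfies the
Yang–Baxter (braid) relation
`(Ř ⊗ id) ∘ (id ⊗ Ř) ∘ (Ř ⊗ id) = (id ⊗ Ř) ∘ (Ř ⊗ id) ∘ (id ⊗ Ř)` on `V ⊗ V ⊗ V`. -/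
theorem stmt6 (F : Type*) [Field F] (q : F) (hq : q ≠ 0) (m n : ℕ) (hmn : 1 ≤ m + n) :
    Matrix.toLin' (R12 F q m (m + n)) ∘ₗ Matrix.toLin' (R23 F q m (m + n)) ∘ₗ
        Matrix.toLin' (R12 F q m (m + n)) =
      Matrix.toLin' (R23 F q m (m + n)) ∘ₗ Matrix.toLin' (R12 F q m (m + n)) ∘ₗ
        Matrix.toLin' (R23 F q m (m + n)) := by
  rw [← Matrix.toLin'_mul, ← Matrix.toLin'_mul, ← Matrix.toLin'_mul, ← Matrix.toLin'_mul,
    YBaux.key q hq m (m + n)]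
end
end

section
/- Assume in addition that q⁴ ≠ 1. Then the eigenspace ker(Ř − q^{-1}·id) of Ř on V ⊗ V is exactly the linear span of the following vectors: x_a ⊗ x_a for 1 ≤ a ≤ m, together with x_a ⊗ x_b + (−1)^{|a||b|}·q^{-1}·x_b ⊗ x_a for 1 ≤ a < b ≤ m+n. -/
set_option maxHeartbeats 2000000

noncomputable section

namespace Stmt7Aux

variable {F : Type*} [Field F] (q : F) (m N : ℕ)

lemma sum_diag (v : Fin N × Fin N → F) (i : Fin N) :
    ∑ p, Rmat F q m N (i, i) p * v p
      = (if (i : ℕ) < m then q⁻¹ else -q) * v (i, i) := by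
  have h : ∀ p : Fin N × Fin N,
      Rmat F q m N (i, i) p * v p
        = if p = (i, i) then (if (i : ℕ) < m then q⁻¹ else -q) * v p else 0 := by
    rintro ⟨a, b⟩
    simp only [Rmat, Matrix.of_apply, Prod.mk.injEq]
    split_ifs
    all_goals try ring
    all_goals exfalso; fin_omega
  rw [Finset.sum_congr rfl fun p _ => h p, Finset.sum_ite_eq' Finset.univ]
  simp

lemma sum_off (v : Fin N × Fin N → F) (i j : Fin N) (hij : i ≠ j) :
    ∑ p, Rmat F q m N (i, j) p * v p
      = (if m ≤ (j : ℕ) ∧ m ≤ (i : ℕ) then (-1 : F) else 1) * v (j, i)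
        + (if j < i then (q⁻¹ - q) * v (i, j) else 0) := by
  have h : ∀ p : Fin N × Fin N,
      Rmat F q m N (i, j) p * v p
        = (if p = (j, i) then (if m ≤ (j : ℕ) ∧ m ≤ (i : ℕ) then (-1 : F) else 1) * v p else 0)
          + (if p = (i, j) then (if j < i then (q⁻¹ - q) else 0) * v p else 0) := by
    rintro ⟨a, b⟩
    simp only [Rmat, Matrix.of_apply, Prod.mk.injEq]
    split_ifs
    all_goals try ring
    all_goals exfalso; fin_omega
  rw [Finset.sum_congr rfl fun p _ => h p, Finset.sum_add_distrib,
    Finset.sum_ite_eq' Finset.univ, Finset.sum_ite_eq' Finset.univ]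
  simp

end Stmt7Aux

open Stmt7Aux in
/-- Assuming moreover `q⁴ ≠ 1`, the eigenspace `ker(Ř − q⁻¹·id)` of the braiding `Ř` on
`V ⊗ V` is exactly the span of the vectors `x_a ⊗ x_a` for `a ≤ m` together with
`x_a ⊗ x_b + (−1)^{|a||b|}·q⁻¹·(x_b ⊗ x_a)` for `a < b`.  (Basis vectors of `V ⊗ V` are
modelled as the standard basis functions `Pi.single (a, b) 1`.) -/
theorem stmt7 (F : Type*) [Field F] (q : F) (hq : q ≠ 0) (hq4 : q ^ 4 ≠ 1)
    (m n : ℕ) (hmn : 1 ≤ m + n) :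
    LinearMap.ker (Matrix.toLin' (Rmat F q m (m + n)) - q⁻¹ • LinearMap.id) =
      Submodule.span F
        ({v : Fin (m + n) × Fin (m + n) → F |
            ∃ a : Fin (m + n), (a : ℕ) < m ∧
              v = (Pi.single (a, a) (1 : F) : Fin (m + n) × Fin (m + n) → F)} ∪
          {v : Fin (m + n) × Fin (m + n) → F |
            ∃ a b : Fin (m + n), a < b ∧
              v = (Pi.single (a, b) (1 : F) : Fin (m + n) × Fin (m + n) → F) +
                ((if m ≤ (a : ℕ) ∧ m ≤ (b : ℕ) then (-1 : F) else 1) * q⁻¹) •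
                  (Pi.single (b, a) (1 : F) : Fin (m + n) × Fin (m + n) → F)}) := by
  have h21 : (1 : F) + q ^ 2 ≠ 0 := by
    intro h
    apply hq4
    have h2 : q ^ 2 = -1 := by linear_combination h
    calc q ^ 4 = (q ^ 2) ^ 2 := by ring
    _ = 1 := by rw [h2]; ring
  apply le_antisymm
  · -- ker ⊆ span
    intro v hv
    have hv' : ∀ c : Fin (m + n) × Fin (m + n),
        ∑ p, Rmat F q m (m + n) c p * v p = q⁻¹ * v c := by
      intro c
      have hv0 := LinearMap.mem_ker.mp hv
      have h2 := congrFun hv0 c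
      simp only [LinearMap.sub_apply, LinearMap.smul_apply, LinearMap.id_apply,
        Matrix.toLin'_apply, Matrix.mulVec, dotProduct, Pi.sub_apply, Pi.smul_apply,
        smul_eq_mul, Pi.zero_apply] at h2
      rw [sub_eq_zero] at h2
      exact h2
    have hdiag : ∀ i : Fin (m + n), m ≤ (i : ℕ) → v (i, i) = 0 := by
      intro i hi
      have h1 := hv' (i, i)
      rw [sum_diag, if_neg (not_lt.mpr hi)] at h1
      have hqq : q * q⁻¹ = 1 := mul_inv_cancel₀ hq
      have h0' : (1 + q ^ 2) * v (i, i) = 0 := by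
        linear_combination (-q) * h1 - v (i, i) * hqq
      rcases mul_eq_zero.mp h0' with h | h
      · exact absurd h h21
      · exact h
    have hoff : ∀ i j : Fin (m + n), i < j →
        v (j, i) = (if m ≤ (j : ℕ) ∧ m ≤ (i : ℕ) then (-1 : F) else 1) * (q⁻¹ * v (i, j)) := by
      intro i j hij
      have h1 := hv' (i, j)
      rw [sum_off _ _ _ _ _ _ hij.ne, if_neg (not_lt.mpr hij.le)] at h1
      split_ifs at h1 ⊢ with h
      · linear_combination -h1
      · linear_combination h1
    have hrepr : v =
        (∑ a ∈ Finset.univ.filter (fun a : Fin (m + n) => (a : ℕ) < m),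
          v (a, a) • (Pi.single (a, a) (1 : F) : Fin (m + n) × Fin (m + n) → F))
        + ∑ p ∈ Finset.univ.filter (fun p : Fin (m + n) × Fin (m + n) => p.1 < p.2),
            v p • ((Pi.single p (1 : F) : Fin (m + n) × Fin (m + n) → F) +
              ((if m ≤ (p.1 : ℕ) ∧ m ≤ (p.2 : ℕ) then (-1 : F) else 1) * q⁻¹) •
                (Pi.single (p.2, p.1) (1 : F) : Fin (m + n) × Fin (m + n) → F)) := by
      funext c
      obtain ⟨i, j⟩ := c
      simp only [Pi.add_apply, Finset.sum_apply, Pi.smul_apply, smul_eq_mul, Pi.single_apply]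
      have e1 : ∀ a ∈ Finset.univ.filter (fun a : Fin (m + n) => (a : ℕ) < m),
          v (a, a) * (if ((i, j) : Fin (m+n) × Fin (m+n)) = (a, a) then (1:F) else 0)
            = if a = i then (if j = i ∧ (i : ℕ) < m then v (a, a) else 0) else 0 := by
        intro a ha
        rw [Finset.mem_filter] at ha
        simp only [Prod.mk.injEq]
        split_ifs
        all_goals try ring
        all_goals exfalso; fin_omega
      have e2 : ∀ p ∈ Finset.univ.filter (fun p : Fin (m + n) × Fin (m + n) => p.1 < p.2),
          v p * ((if ((i, j) : Fin (m+n) × Fin (m+n)) = p then (1:F) else 0) +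
              (if m ≤ (p.1 : ℕ) ∧ m ≤ (p.2 : ℕ) then (-1 : F) else 1) * q⁻¹ *
                (if ((i, j) : Fin (m+n) × Fin (m+n)) = (p.2, p.1) then (1:F) else 0))
            = (if p = (i, j) then v p else 0)
              + (if p = (j, i) then
                  (if m ≤ (j : ℕ) ∧ m ≤ (i : ℕ) then (-1 : F) else 1) * q⁻¹ * v p
                else 0) := by
        rintro ⟨a, b⟩ hp
        rw [Finset.mem_filter] at hp
        simp only [Prod.mk.injEq]
        split_ifs
        all_goals try ring
        all_goals exfalso; fin_omega
      rw [Finset.sum_congr rfl e1, Finset.sum_congr rfl e2, Finset.sum_add_distrib,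
        Finset.sum_ite_eq', Finset.sum_ite_eq', Finset.sum_ite_eq']
      simp only [Finset.mem_filter, Finset.mem_univ, true_and]
      rcases lt_trichotomy i j with h | h | h
      · split_ifs
        all_goals try ring
        all_goals exfalso; fin_omega
      · subst h
        by_cases hi : (i : ℕ) < m
        · rw [if_pos (show i = i ∧ (i : ℕ) < m from ⟨rfl, hi⟩)]
          split_ifs
          all_goals try ring
          all_goals exfalso; fin_omega
        · rw [if_neg (show ¬(i = i ∧ (i : ℕ) < m) from fun hh => hi hh.2),
            hdiag i (not_lt.mp hi)]
          split_ifs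
          all_goals try ring
          all_goals exfalso; fin_omega
      · rw [hoff j i h]
        split_ifs
        all_goals try ring
        all_goals exfalso; fin_omega
    rw [hrepr]
    apply Submodule.add_mem
    · apply Submodule.sum_mem
      intro a ha
      rw [Finset.mem_filter] at ha
      exact Submodule.smul_mem _ _ (Submodule.subset_span (Or.inl ⟨a, ha.2, rfl⟩))
    · apply Submodule.sum_mem
      rintro ⟨a, b⟩ hp
      rw [Finset.mem_filter] at hp
      exact Submodule.smul_mem _ _ (Submodule.subset_span (Or.inr ⟨a, b, hp.2, rfl⟩))
  · -- span ⊆ ker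
    rw [Submodule.span_le]
    rintro v (⟨a, ha, rfl⟩ | ⟨a, b, hab, rfl⟩) <;>
    · rw [SetLike.mem_coe, LinearMap.mem_ker]
      funext c
      obtain ⟨i, j⟩ := c
      simp only [LinearMap.sub_apply, LinearMap.smul_apply, LinearMap.id_apply,
        Matrix.toLin'_apply, Matrix.mulVec, dotProduct, Pi.sub_apply, Pi.smul_apply,
        smul_eq_mul, Pi.zero_apply]
      rw [sub_eq_zero]
      by_cases hij : i = j
      · subst hij
        rw [sum_diag]
        simp only [Pi.add_apply, Pi.smul_apply, smul_eq_mul, Pi.single_apply, Prod.mk.injEq]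
        split_ifs
        all_goals try ring
        all_goals try (exfalso; fin_omega)
        all_goals field_simp
        all_goals try ring
      · rw [sum_off _ _ _ _ _ _ hij]
        simp only [Pi.add_apply, Pi.smul_apply, smul_eq_mul, Pi.single_apply, Prod.mk.injEq]
        split_ifs
        all_goals try ring
        all_goals try (exfalso; fin_omega)
        all_goals field_simp
        all_goals try ring
end
end

section
/- For all integers a ≥ 1 and k ≥ 0: ∑_{s=0}^{a} (−q)^s·[a choose s]·[β−s−k choose a] = q^{−β+k+a}·∑_{s=0}^{a−1} (−q)^s·[a−1 choose s]·[β−s−k−1 choose a−1], where β−s−k denotes the weight 1·β + (−s−k) and q^{−β+k+a} = Q^{−1}·q^{k+a}. -/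
/-!
Write `X = q^x` for a weight `x`. By the q-binomial theorem, `(q - q⁻¹)^a [a]! [x choose a]` is a
Laurent polynomial `∑_j c_j X^(a-2j)`, and, again by the q-binomial theorem, the alternating sum
`f ↦ ∑_s (-q)^s [a choose s] f(q^(-s) X)` kills the monomials `X^a, X^(a-2), …, X^(2-a)`.
Only `X^(-a)` survives, which gives the closed form
`∑_s (-q)^s [a choose s] [x - s choose a] = q^(-a x + a²)`.
The theorem is the quotient of this identity at `(a, β - k)` and at `(a - 1, β - k - 1)`.
-/

noncomputable section

variable {F : Type*}

/-- `q^x` for the formal weight `x = c·β + n`, where `Q` plays the role of `q^β`. -/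
def qpow [Field F] (q Q : F) (c n : ℤ) : F := Q ^ c * q ^ n

/-- The quantum number `[x]` for the formal weight `x = c·β + n`. -/
def qnum [Field F] (q Q : F) (c n : ℤ) : F :=
  (qpow q Q c n - qpow q Q (-c) (-n)) / (q - q⁻¹)

/-- The quantum binomial `[x choose k]` for the formal weight `x = c·β + n`. -/
def qbinom [Field F] (q Q : F) (c n : ℤ) (k : ℕ) : F :=
  (∏ i ∈ Finset.range k, qnum q Q c (n - (i : ℤ))) /
    ∏ i ∈ Finset.range k, qnum q Q 0 ((i : ℤ) + 1)

open Finset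

section Basic

variable [Field F] {q : F} (Q : F)

lemma qpow_zero_left (n : ℤ) : qpow q Q 0 n = q ^ n := by
  simp [qpow]

lemma qpow_neg_neg (c n : ℤ) : qpow q Q (-c) (-n) = (qpow q Q c n)⁻¹ := by
  rw [qpow, qpow, zpow_neg, zpow_neg, mul_inv]

lemma qpow_sub_right (hq : q ≠ 0) (c n m : ℤ) :
    qpow q Q c (n - m) = qpow q Q c n * q ^ (-m) := by
  rw [qpow, qpow, sub_eq_add_neg, zpow_add₀ hq, mul_assoc]

lemma qpow_mul_qpow (hq : q ≠ 0) (hQ : Q ≠ 0) (c n c' n' : ℤ) :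
    qpow q Q c n * qpow q Q c' n' = qpow q Q (c + c') (n + n') := by
  simp only [qpow, zpow_add₀ hq, zpow_add₀ hQ]
  ring

lemma qpow_ne_zero (hq : q ≠ 0) (hQ : Q ≠ 0) (c n : ℤ) : qpow q Q c n ≠ 0 :=
  mul_ne_zero (zpow_ne_zero _ hQ) (zpow_ne_zero _ hq)

lemma qnum_eq (c n : ℤ) :
    qnum q Q c n = (qpow q Q c n - (qpow q Q c n)⁻¹) / (q - q⁻¹) := by
  rw [qnum, qpow_neg_neg]

lemma zpow_sub_zpow_neg_ne_zero (hq : q ≠ 0) (hroot : ∀ j : ℕ, j ≠ 0 → q ^ j ≠ 1) {n : ℕ}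
    (hn : n ≠ 0) : q ^ (n : ℤ) - q ^ (-(n : ℤ)) ≠ 0 := by
  intro h
  rw [sub_eq_zero, zpow_neg, zpow_natCast] at h
  have h2n := mul_inv_cancel₀ (pow_ne_zero n hq)
  rw [← h, ← pow_add, ← two_mul] at h2n
  exact hroot _ (by omega) h2n

-- The coefficient of the surviving monomial `X^(-a)`, against `(q - q⁻¹)^a [a]!` on the right.
lemma prod_zpow_neg_mul_prod_one_sub (hq : q ≠ 0) (a : ℕ) :
    (∏ i ∈ range a, q ^ (-(i : ℤ))) * (-q ^ ((a : ℤ) - 1)) ^ a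
        * ∏ i ∈ range a, (1 - q ^ 2 * q ^ (2 * i))
      = (q ^ a) ^ a * ∏ i ∈ range a, (q ^ ((i : ℤ) + 1) - q ^ (-((i : ℤ) + 1))) := by
  have hfactor : ∀ i : ℕ, q ^ (-(i : ℤ)) * -q ^ ((a : ℤ) - 1) * (1 - q ^ 2 * q ^ (2 * i))
      = q ^ a * (q ^ ((i : ℤ) + 1) - q ^ (-((i : ℤ) + 1))) := by
    intro i
    simp only [zpow_neg, zpow_add₀ hq, zpow_sub₀ hq, zpow_natCast, zpow_one]
    field_simp
    ring
  calc _ = ∏ i ∈ range a, (q ^ (-(i : ℤ)) * -q ^ ((a : ℤ) - 1) * (1 - q ^ 2 * q ^ (2 * i))) := by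
        rw [prod_mul_distrib, prod_mul_distrib, prod_const, card_range]
    _ = _ := by rw [prod_congr rfl fun i _ => hfactor i, prod_mul_distrib, prod_const, card_range]

end Basic

section QBinom

variable [Field F] {q : F} (Q : F)

lemma qnum_zero_left (n : ℤ) : qnum q Q 0 n = (q ^ n - q ^ (-n)) / (q - q⁻¹) := by
  simp [qnum, qpow_zero_left]

lemma qnum_zero_add_one (hq : q ≠ 0) (n t : ℤ) :
    qnum q Q 0 (n + 1) = q ^ (t + 1) * qnum q Q 0 (n - t) + q ^ (t - n) * qnum q Q 0 (t + 1) := by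
  simp only [qnum_zero_left, mul_div_assoc', ← add_div, mul_sub, ← zpow_add₀ hq]
  rw [show t + 1 + (n - t) = n + 1 by ring, show t + 1 + -(n - t) = t - n + (t + 1) by ring,
    show t - n + -(t + 1) = -(n + 1) by ring]
  ring

lemma qbinom_zero_right (c n : ℤ) : qbinom q Q c n 0 = 1 := by
  simp [qbinom]

lemma qbinom_natCast_succ_self (a : ℕ) : qbinom q Q 0 a (a + 1) = 0 := by
  rw [qbinom, prod_range_succ]
  simp [qnum, qpow_zero_left]

variable (hq : q ≠ 0) (hroot : ∀ j : ℕ, j ≠ 0 → q ^ j ≠ 1)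
include hq hroot

lemma prod_qnum_succ_ne_zero (a : ℕ) : ∏ i ∈ range a, qnum q Q 0 ((i : ℤ) + 1) ≠ 0 := by
  refine prod_ne_zero_iff.mpr fun i _ => ?_
  rw [qnum_zero_left]
  exact div_ne_zero (mod_cast zpow_sub_zpow_neg_ne_zero hq hroot i.succ_ne_zero)
    (by simpa using zpow_sub_zpow_neg_ne_zero hq hroot one_ne_zero)

lemma qbinom_natCast_self (a : ℕ) : qbinom q Q 0 a a = 1 := by
  rw [qbinom, div_eq_one_iff_eq (prod_qnum_succ_ne_zero Q hq hroot a),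
    ← prod_range_reflect _ a]
  refine prod_congr rfl fun i hi => ?_
  rw [mem_range] at hi
  congr 1
  omega

lemma qbinom_zero_add_one_succ (n : ℤ) (t : ℕ) :
    qbinom q Q 0 (n + 1) (t + 1)
      = q ^ ((t : ℤ) + 1) * qbinom q Q 0 n (t + 1) + q ^ ((t : ℤ) - n) * qbinom q Q 0 n t := by
  have hdt := prod_qnum_succ_ne_zero Q hq hroot (t + 1)
  rw [prod_range_succ] at hdt
  have hd := right_ne_zero_of_mul hdt
  rw [qbinom, qbinom, qbinom, prod_range_succ (fun i : ℕ => qnum q Q 0 ((i : ℤ) + 1)),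
    prod_range_succ (fun i : ℕ => qnum q Q 0 (n - i)),
    prod_range_succ' (fun i : ℕ => qnum q Q 0 (n + 1 - i))]
  simp only [Nat.cast_add, Nat.cast_one, add_sub_add_right_eq_sub, Nat.cast_zero, sub_zero,
    qnum_zero_add_one Q hq n t]
  field_simp

theorem prod_one_sub_eq_sum_qbinom (a : ℕ) (y : F) :
    ∏ i ∈ range a, (1 - y * q ^ (2 * i))
      = ∑ j ∈ range (a + 1), (-1) ^ j * qbinom q Q 0 a j * (q ^ ((a : ℤ) - 1) * y) ^ j := by
  induction a generalizing y with
  | zero => simp [qbinom_zero_right]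
  | succ a ih =>
    set f := fun j : ℕ => (-1) ^ j * qbinom q Q 0 a j * (q ^ ((a : ℤ) - 1) * (q ^ 2 * y)) ^ j
    have hstep : ∀ j : ℕ, (-1) ^ (j + 1) * qbinom q Q 0 ((a + 1 : ℕ) : ℤ) (j + 1)
        * (q ^ (((a + 1 : ℕ) : ℤ) - 1) * y) ^ (j + 1) = f (j + 1) - y * f j := by
      intro j
      simp only [f, Nat.cast_add, Nat.cast_one, qbinom_zero_add_one_succ Q hq hroot]
      rw [add_sub_cancel_right]
      simp only [zpow_add₀ hq, zpow_sub₀ hq, zpow_natCast, zpow_one, mul_pow, div_pow]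
      field_simp
      ring
    have hshift : ∑ j ∈ range (a + 1), f (j + 1) = ∑ j ∈ range (a + 1), f j - 1 := by
      have h1 := sum_range_succ' f (a + 1)
      rw [sum_range_succ f (a + 1)] at h1
      simp only [f, qbinom_natCast_succ_self, qbinom_zero_right] at h1 ⊢
      linear_combination -h1
    rw [prod_range_succ', sum_range_succ', sum_congr rfl fun j _ => hstep j, sum_sub_distrib,
      ← mul_sum, hshift, ← ih]
    simp only [qbinom_zero_right, pow_zero, mul_one, mul_zero]
    rw [prod_congr rfl fun i _ => show 1 - y * q ^ (2 * (i + 1)) = 1 - q ^ 2 * y * q ^ (2 * i) by ring]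
    ring

lemma qbinom_eq_prod_div (c n : ℤ) (a : ℕ) :
    qbinom q Q c n a
      = (∏ i ∈ range a, (qpow q Q c n * q ^ (-(i : ℤ)) - (qpow q Q c n)⁻¹ * q ^ (i : ℤ)))
        / ∏ i ∈ range a, (q ^ ((i : ℤ) + 1) - q ^ (-((i : ℤ) + 1))) := by
  have hd : (q - q⁻¹) ^ a ≠ 0 :=
    pow_ne_zero _ (by simpa using zpow_sub_zpow_neg_ne_zero hq hroot one_ne_zero)
  simp only [qbinom, qnum_eq, qpow_sub_right Q hq, qpow_zero_left, prod_div_distrib, prod_const,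
    card_range, mul_inv, zpow_neg, inv_inv]
  exact div_div_div_cancel_right₀ hd _ _

lemma prod_sub_eq_sum_qbinom (a : ℕ) {X : F} (hX : X ≠ 0) :
    ∏ i ∈ range a, (X * q ^ (-(i : ℤ)) - X⁻¹ * q ^ (i : ℤ))
      = (∏ i ∈ range a, q ^ (-(i : ℤ)))
        * ∑ j ∈ range (a + 1), (-1) ^ j * qbinom q Q 0 a j * (q ^ ((a : ℤ) - 1)) ^ j
          * X ^ ((a : ℤ) - 2 * j) := by
  have hfactor : ∀ i : ℕ, X * q ^ (-(i : ℤ)) - X⁻¹ * q ^ (i : ℤ)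
      = q ^ (-(i : ℤ)) * X * (1 - X⁻¹ ^ 2 * q ^ (2 * i)) := by
    intro i
    simp only [zpow_neg, zpow_natCast]
    field_simp
    ring
  simp only [hfactor, prod_mul_distrib, prod_const, card_range,
    prod_one_sub_eq_sum_qbinom Q hq hroot, mul_sum, mul_assoc]
  refine sum_congr rfl fun j _ => ?_
  simp only [zpow_sub₀ hX, zpow_mul, zpow_natCast, mul_pow, inv_pow]
  field_simp

lemma sum_qbinom_mul_zpow (a : ℕ) (W : F) (e : ℤ) :
    ∑ s ∈ range (a + 1), (-q) ^ s * qbinom q Q 0 a s * (W * q ^ (-(s : ℤ))) ^ e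
      = W ^ e * ∏ i ∈ range a, (1 - q ^ (2 - (a : ℤ) - e) * q ^ (2 * i)) := by
  rw [prod_one_sub_eq_sum_qbinom Q hq hroot, mul_sum]
  refine sum_congr rfl fun s _ => ?_
  have hbase : q ^ ((a : ℤ) - 1) * q ^ (2 - (a : ℤ) - e) = q ^ (1 - e) := by
    rw [← zpow_add₀ hq]
    ring_nf
  have hpow : (q ^ (1 - e)) ^ s = q ^ s * (q ^ (-(s : ℤ))) ^ e := by
    rw [← zpow_natCast, ← zpow_natCast q s, ← zpow_mul, ← zpow_mul, ← zpow_add₀ hq]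
    ring_nf
  rw [hbase, hpow, mul_zpow, neg_pow]
  ring

lemma prod_zpow_sub_zpow_neg_ne_zero (a : ℕ) :
    ∏ i ∈ range a, (q ^ ((i : ℤ) + 1) - q ^ (-((i : ℤ) + 1))) ≠ 0 :=
  prod_ne_zero_iff.mpr fun i _ => by
    exact_mod_cast zpow_sub_zpow_neg_ne_zero hq hroot i.succ_ne_zero

lemma prod_mul_qbinom_eq_sum (hQ : Q ≠ 0) (c n : ℤ) (a : ℕ) :
    (∏ i ∈ range a, (q ^ ((i : ℤ) + 1) - q ^ (-((i : ℤ) + 1)))) * qbinom q Q c n a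
      = (∏ i ∈ range a, q ^ (-(i : ℤ)))
        * ∑ j ∈ range (a + 1), (-1) ^ j * qbinom q Q 0 a j * (q ^ ((a : ℤ) - 1)) ^ j
          * qpow q Q c n ^ ((a : ℤ) - 2 * j) := by
  rw [qbinom_eq_prod_div Q hq hroot, mul_div_cancel₀ _ (prod_zpow_sub_zpow_neg_ne_zero hq hroot a),
    prod_sub_eq_sum_qbinom Q hq hroot a (qpow_ne_zero Q hq hQ c n)]

lemma sum_qbinom_mul_zpow_eq_zero {a j : ℕ} (hj : j < a) (W : F) :
    ∑ s ∈ range (a + 1), (-q) ^ s * qbinom q Q 0 a s * (W * q ^ (-(s : ℤ))) ^ ((a : ℤ) - 2 * j)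
      = 0 := by
  rw [sum_qbinom_mul_zpow Q hq hroot, prod_eq_zero (i := a - 1 - j) (mem_range.mpr (by omega)),
    mul_zero]
  rw [sub_eq_zero, ← zpow_natCast, ← zpow_add₀ hq, eq_comm]
  convert zpow_zero q
  push_cast [Nat.sub_sub, Nat.cast_sub (show 1 + j ≤ a by omega)]
  ring

theorem sum_qbinom_mul_qbinom_sub (hQ : Q ≠ 0) (a : ℕ) (c m : ℤ) :
    ∑ s ∈ range (a + 1), (-q) ^ s * qbinom q Q 0 a s * qbinom q Q c (m - s) a
      = qpow q Q (-(a * c)) (a * (a - m)) := by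
  set W := qpow q Q c m
  set coeff := fun j : ℕ => (-1) ^ j * qbinom q Q 0 a j * (q ^ ((a : ℤ) - 1)) ^ j
  have hqpow : qpow q Q (-(a * c)) (a * (a - m)) = W ^ (-(a : ℤ)) * (q ^ a) ^ a := by
    simp only [W, qpow, mul_zpow, ← zpow_mul, ← zpow_natCast]
    rw [mul_assoc, ← zpow_add₀ hq]
    ring_nf
  apply mul_left_cancel₀ (prod_zpow_sub_zpow_neg_ne_zero hq hroot a)
  calc _ = (∏ i ∈ range a, q ^ (-(i : ℤ))) * ∑ j ∈ range (a + 1), coeff j *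
        ∑ s ∈ range (a + 1), (-q) ^ s * qbinom q Q 0 a s * (W * q ^ (-(s : ℤ))) ^ ((a : ℤ) - 2 * j) := by
        simp only [mul_sum, mul_left_comm _ ((-q) ^ _ * _), prod_mul_qbinom_eq_sum Q hq hroot hQ,
          qpow_sub_right Q hq]
        rw [sum_comm]
    _ = (∏ i ∈ range a, q ^ (-(i : ℤ))) * (coeff a * (W ^ (-(a : ℤ))
          * ∏ i ∈ range a, (1 - q ^ 2 * q ^ (2 * i)))) := by
        rw [sum_eq_single_of_mem a (self_mem_range_succ a) fun j hj hja => by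
          rw [sum_qbinom_mul_zpow_eq_zero Q hq hroot (by simp at hj; omega), mul_zero],
          sum_qbinom_mul_zpow Q hq hroot]
        rw [show (a : ℤ) - 2 * a = -a by ring, show (2 : ℤ) - a - -a = 2 by ring, zpow_ofNat]
    _ = _ := by
        simp only [hqpow, coeff, qbinom_natCast_self Q hq hroot]
        linear_combination W ^ (-(a : ℤ)) * prod_zpow_neg_mul_prod_one_sub hq a

end QBinom

/-- Equation (5.52) (key lemma for the curl computation): for integers `a ≥ 1`, `k ≥ 0`,
`∑_{s=0}^{a} (−q)^s·[a choose s]·[β−s−k choose a]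
  = q^{−β+k+a}·∑_{s=0}^{a−1} (−q)^s·[a−1 choose s]·[β−s−k−1 choose a−1]`. -/
theorem stmt16 [Field F] (q Q : F) (hq : q ≠ 0) (hQ : Q ≠ 0)
    (hroot : ∀ j : ℕ, j ≠ 0 → q ^ j ≠ 1) (a k : ℕ) (ha : 1 ≤ a) :
    ∑ s ∈ Finset.range (a + 1),
        (-q) ^ s * qbinom q Q 0 (a : ℤ) s * qbinom q Q 1 (-(s : ℤ) - (k : ℤ)) a =
      qpow q Q (-1) ((k : ℤ) + (a : ℤ)) *
        ∑ s ∈ Finset.range a,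
          (-q) ^ s * qbinom q Q 0 ((a : ℤ) - 1) s *
            qbinom q Q 1 (-(s : ℤ) - (k : ℤ) - 1) (a - 1) := by
  obtain ⟨b, rfl⟩ : ∃ b, a = b + 1 := ⟨a - 1, by omega⟩
  have hL := sum_qbinom_mul_qbinom_sub Q hq hroot hQ (b + 1) 1 (-k)
  have hR := sum_qbinom_mul_qbinom_sub Q hq hroot hQ b 1 (-k - 1)
  simp only [show ∀ s : ℤ, -(k : ℤ) - s = -s - k from fun s => by ring] at hL
  simp only [show ∀ s : ℤ, -(k : ℤ) - 1 - s = -s - k - 1 from fun s => by ring] at hR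
  rw [hL, Nat.cast_succ, add_sub_cancel_right, Nat.add_sub_cancel, hR, qpow_mul_qpow Q hq hQ]
  congr 1 <;> ring
end
end
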